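/- Let E be an entanglement measure on pure states satisfying (P1)–(P4). Then E(ψ) = 0 for every separable pure state ψ = a ⊗ b. -/

import Mathlib

open scoped BigOperators ComplexOrder
open Matrix

noncomputable section

/-- Finite-dimensional complex Hilbert space of dimension `m`. -/
abbrev H (m : ℕ) := EuclideanSpace ℂ (Fin m)

/-- The tensor product `H m ⊗ H n`, realized as `EuclideanSpace ℂ (Fin m × Fin n)`. -/
abbrev HT (m n : ℕ) := EuclideanSpace ℂ (Fin m × Fin n)

/-- Elementary tensor `a ⊗ b`. -/
def tensorVec {m n : ℕ} (a : H m) (b : H n) : HT m n :=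
  WithLp.toLp 2 fun p : Fin m × Fin n => a p.1 * b p.2

/-- The projection `|ψ⟩⟨ψ|` as a matrix. -/
def proj {m n : ℕ} (ψ : HT m n) : Matrix (Fin m × Fin n) (Fin m × Fin n) ℂ :=
  Matrix.of fun x y => ψ x * (starRingEnd ℂ) (ψ y)

/-- The projection `|a⟩⟨a|` on a single factor. -/
def proj1 {m : ℕ} (a : H m) : Matrix (Fin m) (Fin m) ℂ :=
  Matrix.of fun i j => a i * (starRingEnd ℂ) (a j)

/-- Partial trace over the second factor. -/
def ptrace2 {m n : ℕ} (M : Matrix (Fin m × Fin n) (Fin m × Fin n) ℂ) :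
    Matrix (Fin m) (Fin m) ℂ :=
  Matrix.of fun i j => ∑ k : Fin n, M (i, k) (j, k)

/-- Partial trace over the first factor. -/
def ptrace1 {m n : ℕ} (M : Matrix (Fin m × Fin n) (Fin m × Fin n) ℂ) :
    Matrix (Fin n) (Fin n) ℂ :=
  Matrix.of fun i j => ∑ k : Fin m, M (k, i) (k, j)

/-- Von Neumann entropy `-Tr(ρ ln ρ)` of a Hermitian matrix, via its eigenvalues. -/
def vnEnt {k : ℕ} {M : Matrix (Fin k) (Fin k) ℂ} (h : M.IsHermitian) : ℝ :=
  ∑ i, Real.negMulLog (h.eigenvalues i)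

/-- Kronecker product of square matrices. -/
def kron {m n : ℕ} (A : Matrix (Fin m) (Fin m) ℂ) (B : Matrix (Fin n) (Fin n) ℂ) :
    Matrix (Fin m × Fin n) (Fin m × Fin n) ℂ :=
  Matrix.of fun p q => A p.1 q.1 * B p.2 q.2

/-- Action of a matrix on a vector. -/
def matVec {m n : ℕ} (M : Matrix (Fin m × Fin n) (Fin m × Fin n) ℂ) (ψ : HT m n) :
    HT m n := WithLp.toLp 2 fun p => ∑ q, M p q * ψ q

/-- The canonical pure state with Schmidt coefficients `μ`. -/
def stdVec {k : ℕ} (μ : Fin k → ℝ) : HT k k :=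
  WithLp.toLp 2 fun p : Fin k × Fin k => if p.1 = p.2 then (Real.sqrt (μ p.1) : ℂ) else 0

/-- Strong Schmidt orthogonality: the supports of both reduced density matrices
are orthogonal. -/
def SchmidtOrthogonal {m n : ℕ} (ψ φ : HT m n) : Prop :=
  ptrace2 (proj ψ) * ptrace2 (proj φ) = 0 ∧ ptrace1 (proj ψ) * ptrace1 (proj φ) = 0

/-- Image of `ψ` under the tensor product of two isometric embeddings. -/
def tensorMap {m n m' n' : ℕ} (f : H m →ₗᵢ[ℂ] H m') (g : H n →ₗᵢ[ℂ] H n')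
    (ψ : HT m n) : HT m' n' :=
  WithLp.toLp 2 fun p : Fin m' × Fin n' => ∑ q : Fin m × Fin n,
    ψ q * f (EuclideanSpace.single q.1 1) p.1 * g (EuclideanSpace.single q.2 1) p.2

/-- Finite probability distribution. -/
def IsProbDist {k : ℕ} (p : Fin k → ℝ) : Prop := (∀ i, 0 ≤ p i) ∧ ∑ i, p i = 1

/-- Multiset of nonzero Schmidt coefficients of `ψ` (eigenvalues of the reduced
density matrix). -/
def schmidtMultiset {m n : ℕ} (ψ : HT m n) (h : (ptrace2 (proj ψ)).IsHermitian) :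
    Multiset ℝ :=
  (Finset.univ.val.map h.eigenvalues).filter (· ≠ 0)

/-- Trace norm of a matrix. -/
def trNorm {a b : ℕ} (A : Matrix (Fin a) (Fin b) ℂ) : ℝ :=
  ∑ i, Real.sqrt ((Matrix.posSemidef_conjTranspose_mul_self A).1.eigenvalues i)

/-- The greatest cross norm. -/
def gcn {m n : ℕ} (M : Matrix (Fin m × Fin n) (Fin m × Fin n) ℂ) : ℝ :=
  sInf { t : ℝ | ∃ (k : ℕ) (x : Fin k → Matrix (Fin m) (Fin m) ℂ)
    (y : Fin k → Matrix (Fin n) (Fin n) ℂ),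
    M = ∑ i, kron (x i) (y i) ∧ t = ∑ i, trNorm (x i) * trNorm (y i) }

/-- Density operator. -/
def IsDensity {d : Type*} [Fintype d] [DecidableEq d] (M : Matrix d d ℂ) : Prop :=
  M.PosSemidef ∧ M.trace = 1

def lineEmbedding {m : ℕ} {a : H m} (ha : ‖a‖ = 1) : H 1 →ₗᵢ[ℂ] H m :=
  (LinearIsometry.toSpanSingleton ℂ (H m) ha).comp
    (OrthonormalBasis.singleton (Fin 1) ℂ).repr.symm.toLinearIsometry

lemma lineEmbedding_single {m : ℕ} {a : H m} (ha : ‖a‖ = 1) :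
    lineEmbedding ha (EuclideanSpace.single 0 1) = a := by
  show (OrthonormalBasis.singleton (Fin 1) ℂ).repr.symm (EuclideanSpace.single 0 1) • a = a
  rw [OrthonormalBasis.repr_symm_single, OrthonormalBasis.singleton_apply, one_smul]

lemma tensorMap_lineEmbedding_stdVec {m n : ℕ} {a : H m} {b : H n} (ha : ‖a‖ = 1)
    (hb : ‖b‖ = 1) :
    tensorMap (lineEmbedding ha) (lineEmbedding hb) (stdVec fun _ => 1) = tensorVec a b := by
  ext p
  simp [tensorMap, tensorVec, stdVec, Fintype.sum_prod_type, lineEmbedding_single]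

lemma norm_stdVec_of_isProbDist {k : ℕ} {μ : Fin k → ℝ} (hμ : IsProbDist μ) :
    ‖stdVec μ‖ = 1 := by
  rw [EuclideanSpace.norm_eq, Fintype.sum_prod_type]
  simp [stdVec, apply_ite, Finset.sum_ite_eq, Real.sq_sqrt (hμ.1 _), hμ.2]

lemma isProbDist_const_one : IsProbDist fun _ : Fin 1 => (1 : ℝ) :=
  ⟨fun _ => zero_le_one, by simp⟩

theorem entanglement_measure_vanishes_on_separable_general
    (E : ∀ m n : ℕ, HT m n → ℝ)
    (hP3 : ∀ (m n m' n' : ℕ) (f : H m →ₗᵢ[ℂ] H m') (g : H n →ₗᵢ[ℂ] H n')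
      (ψ : HT m n), E m' n' (tensorMap f g ψ) = E m n ψ)
    (hP4 : ∀ (m n k : ℕ) (ψ : Fin k → HT m n), (∀ i, ‖ψ i‖ = 1) →
      (∀ i j, i ≠ j → SchmidtOrthogonal (ψ i) (ψ j)) →
      ∀ lam : Fin k → ℂ, (∑ i, ‖lam i‖ ^ 2) = 1 →
      E m n (∑ i, lam i • ψ i)
        = E k k (stdVec fun i => ‖lam i‖ ^ 2) + ∑ i, ‖lam i‖ ^ 2 * E m n (ψ i)) :
    ∀ (m n : ℕ) (a : H m) (b : H n), ‖a‖ = 1 → ‖b‖ = 1 →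
      E m n (tensorVec a b) = 0 := by
  intro m n a b ha hb
  -- (P4) for the one-term superposition `1 • σ` reads `E σ = E σ + E σ`.
  have hE_trivial : E 1 1 (stdVec fun _ => 1) = 0 := by
    have h := hP4 1 1 1 (fun _ => stdVec fun _ => 1)
      (fun _ => norm_stdVec_of_isProbDist isProbDist_const_one)
      (fun i j hij => absurd (Subsingleton.elim i j) hij) (fun _ => 1) (by simp)
    simp only [Fin.sum_univ_one, norm_one, one_pow, one_smul, one_mul] at h
    linarith
  rw [← tensorMap_lineEmbedding_stdVec ha hb, hP3, hE_trivial]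

/-- An entanglement measure on pure states satisfying (P1)-(P4) vanishes on
separable pure states. -/
theorem entanglement_measure_vanishes_on_separable
    (E : ∀ m n : ℕ, HT m n → ℝ)
    (hP1 : ∀ (m n : ℕ), (∀ ψ : HT m n, 0 ≤ E m n ψ) ∧ Continuous (E m n))
    (hP2 : ∀ (m n : ℕ) (U : Matrix (Fin m) (Fin m) ℂ) (V : Matrix (Fin n) (Fin n) ℂ),
      U ∈ Matrix.unitaryGroup (Fin m) ℂ → V ∈ Matrix.unitaryGroup (Fin n) ℂ →
      ∀ ψ : HT m n, E m n (matVec (kron U V) ψ) = E m n ψ)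
    (hP3 : ∀ (m n m' n' : ℕ) (f : H m →ₗᵢ[ℂ] H m') (g : H n →ₗᵢ[ℂ] H n')
      (ψ : HT m n), E m' n' (tensorMap f g ψ) = E m n ψ)
    (hP4 : ∀ (m n k : ℕ) (ψ : Fin k → HT m n), (∀ i, ‖ψ i‖ = 1) →
      (∀ i j, i ≠ j → SchmidtOrthogonal (ψ i) (ψ j)) →
      ∀ lam : Fin k → ℂ, (∑ i, ‖lam i‖ ^ 2) = 1 →
      E m n (∑ i, lam i • ψ i)
        = E k k (stdVec fun i => ‖lam i‖ ^ 2) + ∑ i, ‖lam i‖ ^ 2 * E m n (ψ i)) :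
    ∀ (m n : ℕ) (a : H m) (b : H n), ‖a‖ = 1 → ‖b‖ = 1 →
      E m n (tensorVec a b) = 0 :=
  entanglement_measure_vanishes_on_separable_general E hP3 hP4

end
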